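/- arXiv:2112.07297 — 6 statements merged into one kernel-verified Lean document; each statement's English description precedes it below -/
import Mathlib

section
/- For any even integer s = 2ℓ with ℓ ≥ 1, the sum over i ≥ 0 of C(s, ℓ-2i) for i ≥ 1, plus C(s-1, ℓ-1), equals 2^(s-2). Equivalently: Σ_{i≥1} C(s, ℓ-2i) + C(s-1, ℓ-1) = 2^(s-2). -/
/-!
Pascal's rule splits each `C(2ℓ, ℓ - 2i)` into two coefficients of row `2ℓ - 1`, and these
together run exactly once through `C(2ℓ - 1, j)` for `j < ℓ - 1`. Adding `C(2ℓ - 1, ℓ - 1)`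
gives the lower half of row `2ℓ - 1`, which is `2^(2ℓ - 2)` by the symmetry of the row.
-/

open Finset

theorem sum_range_choose_succ_sub_one_sub_two_mul (n m : ℕ) :
    ∑ i ∈ range ((m + 1) / 2), (n + 1).choose (m - 1 - 2 * i) =
      ∑ j ∈ range m, n.choose j := by
  induction m using Nat.twoStepInduction with
  | zero => simp
  | one => simp
  | more m ih _ =>
    rw [show (m + 2 + 1) / 2 = (m + 1) / 2 + 1 by omega, sum_range_succ', sum_range_succ,
      sum_range_succ, ← ih, add_assoc, show m + 2 - 1 - 2 * 0 = m + 1 by omega,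
      Nat.choose_succ_succ]
    refine congrArg (· + _) (sum_congr rfl fun i _ => ?_)
    congr 1
    omega

/-- For any even integer `s = 2ℓ` with `ℓ ≥ 1`,
`∑_{i ≥ 1} C(s, ℓ-2i) + C(s-1, ℓ-1) = 2^(s-2)`.
Terms with negative lower index vanish (encoded by the `if` guard). -/
theorem sum_choose_even_cycle_ell (ℓ s : ℕ) (hℓ : 1 ≤ ℓ) (hs : s = 2 * ℓ) :
    (∑ i ∈ Finset.Icc 1 s, if 2 * i ≤ ℓ then s.choose (ℓ - 2 * i) else 0) +
      (s - 1).choose (ℓ - 1) = 2 ^ (s - 2) := by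
  obtain ⟨m, rfl⟩ : ∃ m, ℓ = m + 1 := ⟨ℓ - 1, by omega⟩
  subst hs
  have hreindex : (∑ i ∈ Icc 1 (2 * (m + 1)),
        if 2 * i ≤ m + 1 then (2 * (m + 1)).choose (m + 1 - 2 * i) else 0) =
      ∑ i ∈ range ((m + 1) / 2), (2 * m + 1 + 1).choose (m - 1 - 2 * i) := by
    rw [← sum_filter, show (Icc 1 (2 * (m + 1))).filter (fun i => 2 * i ≤ m + 1) =
      Ico 1 ((m + 1) / 2 + 1) by ext; simp only [mem_filter, mem_Icc, mem_Ico]; omega,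
      sum_Ico_eq_sum_range, Nat.add_sub_cancel]
    refine sum_congr rfl fun i _ => ?_
    congr 1
    omega
  rw [hreindex, sum_range_choose_succ_sub_one_sub_two_mul,
    show 2 * (m + 1) - 1 = 2 * m + 1 by omega, Nat.add_sub_cancel, ← sum_range_succ,
    Nat.sum_range_choose_halfway,
    show 2 * (m + 1) - 2 = 2 * m by omega, pow_mul]
  norm_num
end

section
/- For integers s ≥ 1, q ≥ 2 and d ≥ 0, define k(s,d,q) = Σ_{j≥0} (-1)^j C(s-1, j) C(s-1+d-(q-1)j, s-1) (where binomial coefficients with negative upper argument are taken to be 0). Then k(s, d, 3) = Σ_{i≥0} C(s, d-2i). -/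
/-!
Both sides are the coefficient of `t ^ d` in `(1 + t) ^ (s - 1) / (1 - t)`. The left side is that
coefficient read off from the Hilbert series `(1 - t ^ (q - 1)) ^ (s - 1) / (1 - t) ^ s` of the
complete intersection at `q = 3`, where `1 - t ^ 2 = (1 + t) (1 - t)`. The right side is the
coefficient of `(1 + t) ^ s / (1 - t ^ 2)`, with the geometric series in `t ^ 2` truncated past
degree `d`.
-/

open Finset PowerSeries

section

variable {R : Type*} [CommRing R]

lemma coeff_one_add_X_pow (s k : ℕ) : coeff k ((1 + X : R⟦X⟧) ^ s) = s.choose k := by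
  have hpoly : (1 + X : R⟦X⟧) ^ s = (((1 : Polynomial R) + Polynomial.X) ^ s : Polynomial R) := by
    simp
  rw [hpoly, Polynomial.coeff_coe, Polynomial.coeff_one_add_X_pow]

lemma coeff_X_pow_mul_invOneSubPow (k n d : ℕ) :
    coeff d (X ^ k * (invOneSubPow R (n + 1)).val) =
      if k ≤ n + d then ((n + d - k).choose n : R) else 0 := by
  rw [coeff_X_pow_mul', invOneSubPow_val_succ_eq_mk_add_choose, coeff_mk]
  split_ifs with hd hnd hnd
  · rw [Nat.add_sub_assoc hd]
  · omega
  · rw [Nat.choose_eq_zero_of_lt (by omega), Nat.cast_zero]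
  · rfl

lemma coeff_one_sub_X_pow_pow_mul_invOneSubPow (m n d : ℕ) :
    coeff d ((1 - X ^ m) ^ n * (invOneSubPow R (n + 1)).val) =
      ∑ j ∈ range (n + 1), (-1 : R) ^ j * n.choose j *
        (if m * j ≤ n + d then ((n + d - m * j).choose n : R) else 0) := by
  rw [sub_eq_neg_add, add_pow, sum_mul, map_sum]
  refine sum_congr rfl fun j _ => ?_
  rw [← coeff_X_pow_mul_invOneSubPow, ← coeff_C_mul]
  congr 1
  rw [neg_pow, pow_mul]
  simp only [one_pow, mul_one, map_mul, map_pow, map_neg, map_one, map_natCast]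
  ring

lemma one_sub_X_sq_pow_mul_invOneSubPow (n : ℕ) :
    (1 - X ^ 2 : R⟦X⟧) ^ n * (invOneSubPow R (n + 1)).val =
      (1 + X) ^ n * (PowerSeries.mk 1 : R⟦X⟧) := by
  have hcancel := one_sub_pow_mul_invOneSubPow_val_add_eq_invOneSubPow_val R 1 n
  rw [add_comm 1 n] at hcancel
  rw [show (1 - X ^ 2 : R⟦X⟧) = (1 + X) * (1 - X) by ring, mul_pow, mul_assoc, hcancel,
    invOneSubPow_val_eq_mk_sub_one_add_choose_of_pos R 1 one_pos]
  congr 2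
  ext
  simp

lemma sum_X_pow_two_mul_mul_one_add_X (N : ℕ) :
    (∑ i ∈ range N, X ^ (2 * i) : R⟦X⟧) * (1 + X) =
      (1 - X ^ (2 * N)) * (PowerSeries.mk 1 : R⟦X⟧) := by
  have hgeom := geom_sum_mul_neg (X ^ 2 : R⟦X⟧) N
  simp only [← pow_mul] at hgeom
  rw [← hgeom]
  linear_combination
    (-(∑ i ∈ range N, X ^ (2 * i) : R⟦X⟧) * (1 + X)) * mk_one_mul_one_sub_eq_one R

lemma coeff_sum_X_pow_two_mul_mul_one_add_X_pow {N d : ℕ} (hd : d < 2 * N) (n : ℕ) :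
    coeff d ((∑ i ∈ range N, X ^ (2 * i) : R⟦X⟧) * (1 + X) ^ (n + 1)) =
      coeff d ((1 + X) ^ n * PowerSeries.mk 1 : R⟦X⟧) := by
  rw [pow_succ', ← mul_assoc, sum_X_pow_two_mul_mul_one_add_X, sub_mul, sub_mul, one_mul,
    mul_assoc, map_sub, coeff_X_pow_mul', if_neg (by omega), sub_zero, mul_comm]

lemma coeff_sum_X_pow_two_mul_mul (N d : ℕ) (f : R⟦X⟧) :
    coeff d ((∑ i ∈ range N, X ^ (2 * i) : R⟦X⟧) * f) =
      ∑ i ∈ range N, if 2 * i ≤ d then coeff (d - 2 * i) f else 0 := by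
  simp only [sum_mul, map_sum, coeff_X_pow_mul']

end

/-- With `k(s,d,q) = ∑_{j≥0} (-1)^j C(s-1,j) C(s-1+d-(q-1)j, s-1)` (binomials with
negative upper argument being `0`, encoded by the `if` guard), one has
`k(s, d, 3) = ∑_{i≥0} C(s, d-2i)` for all `s ≥ 1`, `d ≥ 0`. -/
theorem torus_hilbert_q_three (s d : ℕ) (hs : 1 ≤ s) :
    (∑ j ∈ Finset.range s, (-1 : ℤ) ^ j * (s - 1).choose j *
        (if (3 - 1) * j ≤ s - 1 + d then ((s - 1 + d - (3 - 1) * j).choose (s - 1) : ℤ) else 0))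
      = ∑ i ∈ Finset.range (d + 1), if 2 * i ≤ d then (s.choose (d - 2 * i) : ℤ) else 0 := by
  obtain ⟨n, rfl⟩ : ∃ n, s = n + 1 := ⟨s - 1, by omega⟩
  simp only [Nat.add_sub_cancel]
  calc _ = coeff d ((1 - X ^ (3 - 1) : ℤ⟦X⟧) ^ n * (invOneSubPow ℤ (n + 1)).val) :=
        (coeff_one_sub_X_pow_pow_mul_invOneSubPow _ n d).symm
    _ = coeff d ((1 + X : ℤ⟦X⟧) ^ n * PowerSeries.mk 1) := by
        rw [one_sub_X_sq_pow_mul_invOneSubPow]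
    _ = coeff d ((∑ i ∈ range (d + 1), X ^ (2 * i) : ℤ⟦X⟧) * (1 + X) ^ (n + 1)) :=
        (coeff_sum_X_pow_two_mul_mul_one_add_X_pow (by omega) n).symm
    _ = _ := by simp only [coeff_sum_X_pow_two_mul_mul, coeff_one_add_X_pow]
end

section
/- Fix integers q ≥ 3 and s ≥ 2, and let d ≥ 1 with d ≤ (q-2)(s-1) - 1. Write d = k(q-2) + ℓ with integers k ≥ 0 and 1 ≤ ℓ ≤ q-2 (this representation exists and is unique). Then the quantity δ(d) = (q-1)^{s-(k+2)} (q-1-ℓ) is strictly decreasing as a function of d on the range 1 ≤ d ≤ (q-2)(s-1)-1, and δ((q-2)(s-1)-1) > 1. -/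
/-!
Writing `d = k (q - 2) + ℓ` orders the degrees lexicographically by `(k, ℓ)`. Raising `ℓ`
lowers the factor `q - 1 - ℓ`, while raising `k` costs a whole factor `q - 1`, which outweighs
any change of `ℓ`. One step beyond the range, at `d = (q - 2)(s - 1)`, one has `k = s - 2`,
`ℓ = q - 2` and `δ = 1`, so strict monotonicity gives `δ > 1` at the last degree.
-/

namespace Nat

variable {m k ℓ : ℕ}

theorem mul_add_sub_one_div_mod (hℓ : 1 ≤ ℓ) (hℓm : ℓ ≤ m) :
    (k * m + ℓ - 1) / m = k ∧ (k * m + ℓ - 1) % m = ℓ - 1 :=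
  (Nat.div_mod_unique (by omega)).2 ⟨by rw [mul_comm]; omega, by omega⟩

theorem existsUnique_mul_add_of_pos {d : ℕ} (hm : 0 < m) (hd : 1 ≤ d) :
    ∃! kl : ℕ × ℕ, 1 ≤ kl.2 ∧ kl.2 ≤ m ∧ d = kl.1 * m + kl.2 := by
  refine ⟨((d - 1) / m, (d - 1) % m + 1), ⟨by omega, mod_lt _ hm, ?_⟩, ?_⟩
  · have := div_add_mod' (d - 1) m
    dsimp only
    omega
  · rintro ⟨k, ℓ⟩ ⟨hℓ, hℓm, rfl⟩
    obtain ⟨hk, hl⟩ := mul_add_sub_one_div_mod (k := k) hℓ hℓm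
    simp only [hk, hl, Prod.mk.injEq, true_and]
    omega

theorem lt_or_eq_and_lt_of_mul_add_lt {k' ℓ' : ℕ} (hℓ' : ℓ' ≤ m)
    (h : k * m + ℓ < k' * m + ℓ') : k < k' ∨ k = k' ∧ ℓ < ℓ' := by
  rcases lt_trichotomy k k' with hlt | rfl | hgt
  · exact .inl hlt
  · exact .inr ⟨rfl, by omega⟩
  · have : (k' + 1) * m ≤ k * m := Nat.mul_le_mul_right m hgt
    rw [add_one_mul] at this
    omega

theorem lt_of_mul_add_le_mul {n : ℕ} (hℓ : 1 ≤ ℓ) (h : k * m + ℓ ≤ m * n) : k < n :=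
  Nat.lt_of_mul_lt_mul_left (a := m) (by rw [mul_comm]; omega)

end Nat

/-- The paper's `δ(d)` for `d = k (q - 2) + ℓ`. -/
def torusDelta (q s k ℓ : ℕ) : ℕ := (q - 1) ^ (s - (k + 2)) * (q - 1 - ℓ)

theorem torusDelta_lt_of_lex {q s k₁ ℓ₁ k₂ ℓ₂ : ℕ} (hℓ₁ : ℓ₁ < q - 1) (hℓ₂ : 1 ≤ ℓ₂)
    (hk₂ : k₂ + 2 ≤ s) (h : k₁ < k₂ ∨ k₁ = k₂ ∧ ℓ₁ < ℓ₂) :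
    torusDelta q s k₂ ℓ₂ < torusDelta q s k₁ ℓ₁ := by
  have hb : 0 < q - 1 := by omega
  rcases h with hk | ⟨rfl, hℓ⟩
  · calc (q - 1) ^ (s - (k₂ + 2)) * (q - 1 - ℓ₂)
        < (q - 1) ^ (s - (k₂ + 2)) * (q - 1) := by gcongr; omega
      _ = (q - 1) ^ (s - (k₂ + 2) + 1) := (pow_succ _ _).symm
      _ ≤ (q - 1) ^ (s - (k₁ + 2)) := Nat.pow_le_pow_right hb (by omega)
      _ ≤ (q - 1) ^ (s - (k₁ + 2)) * (q - 1 - ℓ₁) := Nat.le_mul_of_pos_right _ (by omega)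
  · unfold torusDelta
    gcongr

theorem torusDelta_lt_of_lt {q s k₁ ℓ₁ k₂ ℓ₂ : ℕ} (hℓ₁q : ℓ₁ ≤ q - 2)
    (hℓ₂ : 1 ≤ ℓ₂) (hℓ₂q : ℓ₂ ≤ q - 2) (hlt : k₁ * (q - 2) + ℓ₁ < k₂ * (q - 2) + ℓ₂)
    (hle : k₂ * (q - 2) + ℓ₂ ≤ (q - 2) * (s - 1)) :
    torusDelta q s k₂ ℓ₂ < torusDelta q s k₁ ℓ₁ :=
  torusDelta_lt_of_lex (by omega) hℓ₂ (by have := Nat.lt_of_mul_add_le_mul hℓ₂ hle; omega)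
    (Nat.lt_or_eq_and_lt_of_mul_add_lt hℓ₂q hlt)

theorem torusDelta_sub_two_sub_two {q s : ℕ} (hq : 2 ≤ q) (hs : 2 ≤ s) :
    torusDelta q s (s - 2) (q - 2) = 1 := by
  simp [torusDelta, show s - (s - 2 + 2) = 0 by omega, show q - 1 - (q - 2) = 1 by omega]

theorem torus_min_dist_formula_monotone_general (q s : ℕ) :
    (∀ d, 1 ≤ d → d ≤ (q - 2) * (s - 1) - 1 →
      ∃! kl : ℕ × ℕ, 1 ≤ kl.2 ∧ kl.2 ≤ q - 2 ∧ d = kl.1 * (q - 2) + kl.2) ∧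
    (∀ d₁ d₂ k₁ ℓ₁ k₂ ℓ₂, 1 ≤ d₁ → d₁ < d₂ → d₂ ≤ (q - 2) * (s - 1) - 1 →
      d₁ = k₁ * (q - 2) + ℓ₁ → 1 ≤ ℓ₁ → ℓ₁ ≤ q - 2 →
      d₂ = k₂ * (q - 2) + ℓ₂ → 1 ≤ ℓ₂ → ℓ₂ ≤ q - 2 →
      (q - 1) ^ (s - (k₂ + 2)) * (q - 1 - ℓ₂) < (q - 1) ^ (s - (k₁ + 2)) * (q - 1 - ℓ₁)) ∧
    (∀ k ℓ, (q - 2) * (s - 1) - 1 = k * (q - 2) + ℓ → 1 ≤ ℓ → ℓ ≤ q - 2 →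
      1 < (q - 1) ^ (s - (k + 2)) * (q - 1 - ℓ)) := by
  refine ⟨?_, ?_, ?_⟩
  · intro d hd hdle
    exact Nat.existsUnique_mul_add_of_pos
      (Nat.pos_of_mul_pos_right (a := q - 2) (b := s - 1) (by omega)) hd
  · rintro d₁ d₂ k₁ ℓ₁ k₂ ℓ₂ - hlt hle rfl - hℓ₁q rfl hℓ₂ hℓ₂q
    exact torusDelta_lt_of_lt hℓ₁q hℓ₂ hℓ₂q hlt (by omega)
  · intro k ℓ htop hℓ hℓq
    have hs : 2 ≤ s := by
      have := Nat.pos_of_mul_pos_left (a := q - 2) (b := s - 1) (by omega)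
      omega
    have hnext : (s - 2) * (q - 2) + (q - 2) = (q - 2) * (s - 1) := by
      rw [← add_one_mul, mul_comm, show s - 2 + 1 = s - 1 by omega]
    exact (torusDelta_sub_two_sub_two (by omega) hs).symm.trans_lt
      (torusDelta_lt_of_lt hℓq (by omega) le_rfl (by omega) hnext.le)

/-- For `q ≥ 3`, `s ≥ 2` and `1 ≤ d ≤ (q-2)(s-1) - 1`:
(a) the representation `d = k(q-2) + ℓ` with `k ≥ 0`, `1 ≤ ℓ ≤ q-2` exists and is unique;
(b) the quantity `δ(d) = (q-1)^(s-(k+2)) (q-1-ℓ)` is strictly decreasing in `d` on this range;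
(c) its value at `d = (q-2)(s-1)-1` is `> 1`. -/
theorem torus_min_dist_formula_monotone (q s : ℕ) (hq : 3 ≤ q) (hs : 2 ≤ s) :
    (∀ d, 1 ≤ d → d ≤ (q - 2) * (s - 1) - 1 →
      ∃! kl : ℕ × ℕ, 1 ≤ kl.2 ∧ kl.2 ≤ q - 2 ∧ d = kl.1 * (q - 2) + kl.2) ∧
    (∀ d₁ d₂ k₁ ℓ₁ k₂ ℓ₂, 1 ≤ d₁ → d₁ < d₂ → d₂ ≤ (q - 2) * (s - 1) - 1 →
      d₁ = k₁ * (q - 2) + ℓ₁ → 1 ≤ ℓ₁ → ℓ₁ ≤ q - 2 →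
      d₂ = k₂ * (q - 2) + ℓ₂ → 1 ≤ ℓ₂ → ℓ₂ ≤ q - 2 →
      (q - 1) ^ (s - (k₂ + 2)) * (q - 1 - ℓ₂) < (q - 1) ^ (s - (k₁ + 2)) * (q - 1 - ℓ₁)) ∧
    (∀ k ℓ, (q - 2) * (s - 1) - 1 = k * (q - 2) + ℓ → 1 ≤ ℓ → ℓ ≤ q - 2 →
      1 < (q - 1) ^ (s - (k + 2)) * (q - 1 - ℓ)) :=
  torus_min_dist_formula_monotone_general q s
end

section
/- Let G be a connected bipartite graph with parts of sizes a and b (so n = a + b vertices) and at least one edge, over a finite field with q elements. Then the projective algebraic toric set X parameterized by the edges of G satisfies |X| = (q-1)^{a+b-2}. -/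
/-!
Two points `x, y` of the torus have the same image iff `(x⁻¹ y)_i (x⁻¹ y)_j` is the same
scalar for every edge `ij`, so the fibres of the parametrization are the cosets of one
subgroup `H`. Along a walk this edge condition forces `z_u = z_v` whenever `u, v` have the
same colour, so for a connected bipartite graph `H` consists of the vectors constant on each
colour class and `|H| = (q-1)^2`. Hence `|X| (q-1)^2 = (q-1)^n`.
-/

theorem Subgroup.card_range_mul_card_of_eq_iff_inv_mul_mem {A β : Type*} [Group A] (f : A → β)
    (H : Subgroup A) (hf : ∀ x y, f x = f y ↔ x⁻¹ * y ∈ H) :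
    Nat.card (Set.range f) * Nat.card H = Nat.card A := by
  rw [H.card_eq_card_quotient_mul_card_subgroup]
  congr 1
  exact Nat.card_congr <| (Setoid.quotientKerEquivRange f).symm.trans <|
    Quotient.congrRight fun x y => (hf x y).trans QuotientGroup.leftRel_apply.symm

theorem Projectivization.mk_units_eq_mk_units_iff {ι K : Type*} [Field K] (u v : ι → Kˣ)
    (hu : (fun i => (u i : K)) ≠ 0) (hv : (fun i => (v i : K)) ≠ 0) :
    mk K (fun i => (u i : K)) hu = mk K (fun i => (v i : K)) hv ↔
      u⁻¹ * v ∈ (Pi.constMonoidHom ι Kˣ).range := by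
  have hsmul (a : Kˣ) : a • (fun i => (v i : K)) = (fun i => (u i : K)) ↔ a • v = u := by
    simp only [funext_iff, Pi.smul_apply, Units.ext_iff, Units.smul_def, smul_eq_mul,
      Units.val_mul]
  simp only [mk_eq_mk_iff, hsmul, MonoidHom.mem_range]
  constructor
  · rintro ⟨a, rfl⟩
    exact ⟨a⁻¹, by ext; simp⟩
  · rintro ⟨a, ha⟩
    refine ⟨a⁻¹, funext fun i => ?_⟩
    have := congrFun ha i
    simp only [Pi.constMonoidHom_apply, Function.const_apply, Pi.mul_apply, Pi.inv_apply] at this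
    simp [this]

namespace SimpleGraph

variable {V M : Type*} (G : SimpleGraph V)

def edgeMonomial [CommMonoid M] : (V → M) →* (G.edgeSet → M) where
  toFun x e := Sym2.lift ⟨fun i j => x i * x j, fun i j => mul_comm (x i) (x j)⟩ e.1
  map_one' := by
    ext ⟨e, _⟩
    induction e using Sym2.ind
    simp
  map_mul' x y := by
    ext ⟨e, _⟩
    induction e using Sym2.ind
    simp [mul_mul_mul_comm]

@[simp]
theorem edgeMonomial_mk [CommMonoid M] (x : V → M) {i j : V} (h : s(i, j) ∈ G.edgeSet) :
    G.edgeMonomial x ⟨s(i, j), h⟩ = x i * x j :=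
  rfl

/-- The kernel of the torus map `x ↦ [x_i x_j]` into projective space. -/
def edgeMonomialProjKer (M : Type*) [CommGroup M] : Subgroup (V → M) :=
  (Pi.constMonoidHom G.edgeSet M).range.comap G.edgeMonomial

theorem mem_edgeMonomialProjKer [CommGroup M] {x : V → M} :
    x ∈ G.edgeMonomialProjKer M ↔ ∃ l : M, ∀ i j, G.Adj i j → x i * x j = l := by
  simp only [edgeMonomialProjKer, Subgroup.mem_comap, MonoidHom.mem_range, funext_iff,
    Pi.constMonoidHom_apply, Function.const_apply, Subtype.forall, Sym2.forall, mem_edgeSet,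
    edgeMonomial_mk]
  exact exists_congr fun l => forall₃_congr fun i j _ => eq_comm

namespace Coloring

variable {G}

theorem surjective_of_edgeSet_nonempty (c : G.Coloring (Fin 2)) (he : G.edgeSet.Nonempty) :
    Function.Surjective c := by
  have hcover : ∀ a b k : Fin 2, a ≠ b → a = k ∨ b = k := by decide
  obtain ⟨e, he⟩ := he
  induction e using Sym2.ind with
  | _ u v =>
    intro k
    rcases hcover _ _ k (c.valid (G.mem_edgeSet.1 he)) with hu | hv
    exacts [⟨u, hu⟩, ⟨v, hv⟩]

theorem eq_of_walk_of_mul_eq [CommGroup M] (c : G.Coloring (Fin 2)) {x : V → M} {l : M}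
    (hx : ∀ i j, G.Adj i j → x i * x j = l) {u v : V} (p : G.Walk u v) :
    (c u = c v → x u = x v) ∧ (c u ≠ c v → x u * x v = l) := by
  induction p with
  | nil => exact ⟨fun _ => rfl, fun h => absurd rfl h⟩
  | @cons u w v huw _ ih =>
    have third : ∀ a b d : Fin 2, a ≠ b → a ≠ d → b = d := by decide
    constructor
    · intro huv
      have hwv : x w * x v = l := ih.2 fun hwv => c.valid huw (huv.trans hwv.symm)
      exact mul_right_cancel ((hx u w huw).trans (hwv.symm.trans (mul_comm _ _)))
    · intro huv
      rw [← ih.1 (third _ _ _ (c.valid huw) huv)]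
      exact hx u w huw

theorem eq_of_mem_edgeMonomialProjKer [CommGroup M] (hG : G.Preconnected)
    (c : G.Coloring (Fin 2)) {x : V → M} (hx : x ∈ G.edgeMonomialProjKer M) {u v : V}
    (h : c u = c v) : x u = x v := by
  obtain ⟨l, hl⟩ := G.mem_edgeMonomialProjKer.1 hx
  exact (eq_of_walk_of_mul_eq c hl (hG u v).some).1 h

end Coloring

theorem edgeMonomialProjKer_eq_range [CommGroup M] (hG : G.Connected) (c : G.Coloring (Fin 2))
    (hc : Function.Surjective c) :
    (G.edgeMonomialProjKer M : Set (V → M)) = Set.range fun y : Fin 2 → M => y ∘ c := by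
  have hpair : ∀ a b : Fin 2, a ≠ b → a = 0 ∧ b = 1 ∨ a = 1 ∧ b = 0 := by decide
  ext x
  constructor
  · intro hx
    refine ⟨fun k => x (Function.surjInv hc k), funext fun i => ?_⟩
    exact c.eq_of_mem_edgeMonomialProjKer hG.preconnected hx (Function.surjInv_eq hc (c i))
  · rintro ⟨y, rfl⟩
    refine G.mem_edgeMonomialProjKer.2 ⟨y 0 * y 1, fun i j hij => ?_⟩
    rcases hpair _ _ (c.valid hij) with ⟨hi, hj⟩ | ⟨hi, hj⟩
    · simp [hi, hj]
    · simp [hi, hj, mul_comm]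

theorem card_edgeMonomialProjKer [CommGroup M] (hG : G.Connected) (c : G.Coloring (Fin 2))
    (he : G.edgeSet.Nonempty) : Nat.card (G.edgeMonomialProjKer M) = Nat.card M ^ 2 := by
  have hc := c.surjective_of_edgeSet_nonempty he
  rw [← SetLike.coe_sort_coe, G.edgeMonomialProjKer_eq_range hG c hc,
    Nat.card_range_of_injective hc.injective_comp_right, Nat.card_fun, Nat.card_fin]

variable (K : Type*) [Field K] {G}

def toricPoint (he : G.edgeSet.Nonempty) (x : V → Kˣ) : Projectivization K (G.edgeSet → K) :=
  Projectivization.mk K (fun e => ((G.edgeMonomial x e : Kˣ) : K)) fun h0 =>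
    Units.ne_zero _ (congrFun h0 ⟨he.some, he.some_mem⟩)

theorem toricPoint_eq_toricPoint_iff (he : G.edgeSet.Nonempty) (x y : V → Kˣ) :
    toricPoint K he x = toricPoint K he y ↔ x⁻¹ * y ∈ G.edgeMonomialProjKer Kˣ := by
  rw [toricPoint, toricPoint, Projectivization.mk_units_eq_mk_units_iff, edgeMonomialProjKer,
    Subgroup.mem_comap, map_mul, map_inv]

theorem ncard_range_toricPoint_mul [Fintype K] [Fintype V] (hG : G.Connected)
    (c : G.Coloring (Fin 2)) (he : G.edgeSet.Nonempty) :
    (Set.range (toricPoint K he)).ncard * (Fintype.card K - 1) ^ 2 =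
      (Fintype.card K - 1) ^ Fintype.card V := by
  have h := Subgroup.card_range_mul_card_of_eq_iff_inv_mul_mem _ _ (toricPoint_eq_toricPoint_iff K he)
  rwa [G.card_edgeMonomialProjKer hG c he, Nat.card_fun, Nat.card_units, Nat.card_coe_set_eq,
    Nat.card_eq_fintype_card (α := K), Nat.card_eq_fintype_card (α := V)] at h

end SimpleGraph

theorem Fin.card_filter_eq_zero_add_card_filter_eq_one {α : Type*} [Fintype α] (c : α → Fin 2) :
    (Finset.univ.filter fun v => c v = 0).card + (Finset.univ.filter fun v => c v = 1).card =
      Fintype.card α := by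
  rw [← Fin.sum_univ_two fun k => (Finset.univ.filter fun v => c v = k).card, ← Finset.card_univ,
    Finset.card_eq_sum_card_fiberwise fun _ _ => Finset.mem_coe.2 (Finset.mem_univ (c _))]

/-- Let `G` be a connected bipartite graph with parts of sizes `a` and `b` (so
`n = a + b` vertices) and at least one edge, over a finite field `K` with `q` elements.
The projective algebraic toric set `X` parameterized by the edges of `G` — the image
of the torus under the map whose coordinate at the edge `{i,j}` is `x_i x_j` — satisfies
`|X| = (q-1)^(a+b-2)`. -/
theorem card_toric_set_bipartite (K : Type*) [Field K] [Fintype K]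
    (n a b : ℕ) (G : SimpleGraph (Fin n)) (hconn : G.Connected)
    (c : G.Coloring (Fin 2))
    (ha : (Finset.univ.filter fun v => c v = 0).card = a)
    (hb : (Finset.univ.filter fun v => c v = 1).card = b)
    (he : G.edgeSet.Nonempty) :
    Set.ncard
      (Set.range fun x : Fin n → Kˣ =>
        Projectivization.mk K
          (fun e : G.edgeSet =>
            ((Sym2.lift ⟨fun i j => x i * x j, fun i j => mul_comm (x i) (x j)⟩ e.1 : Kˣ) : K))
          (by
            intro h0
            obtain ⟨e, heE⟩ := he
            exact Units.ne_zero _ (congrFun h0 ⟨e, heE⟩)))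
      = (Fintype.card K - 1) ^ (a + b - 2) := by
  change (Set.range (SimpleGraph.toricPoint K he)).ncard = _
  have hcount := SimpleGraph.ncard_range_toricPoint_mul K hconn c he
  have hab : a + b = n := by
    rw [← ha, ← hb, Fin.card_filter_eq_zero_add_card_filter_eq_one, Fintype.card_fin]
  have hn : 2 ≤ n := by
    simpa using Fintype.card_le_of_surjective c (c.surjective_of_edgeSet_nonempty he)
  have hq : 0 < Fintype.card K - 1 := Nat.sub_pos_of_lt Fintype.one_lt_card
  refine Nat.eq_of_mul_eq_mul_right (pow_pos hq 2) ?_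
  rw [hcount, ← pow_add, hab, Nat.sub_add_cancel hn, Fintype.card_fin]
end

section
/- Let k(s,d,q) = Σ_{j≥0} (-1)^j C(s-1,j) C(s-1+d-(q-1)j, s-1) be the dimension of the degree-d code on the projective torus in P^{s-1}. Then for all s ≥ 2 and q ≥ 3, k(s,d,q) = (q-1)^{s-1} for all d ≥ (s-1)(q-2). -/
open Finset fwdDiff in
lemma fwdDiff_iter_choose_const (Q : ℕ) : ∀ (m c : ℕ),
    (Δ_[Q])^[m] (fun x : ℕ => (((x + c).choose m : ℤ))) = fun _ => (Q : ℤ) ^ m := by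
  intro m
  induction m with
  | zero => simp
  | succ m IH =>
    intro c
    have h1 : Δ_[Q] (fun x : ℕ => (((x + c).choose (m + 1) : ℤ)))
        = ∑ i ∈ Finset.range Q, (fun x : ℕ => (((x + (c + i)).choose m : ℤ))) := by
      funext x
      have htel := Finset.sum_range_sub (fun i => (((x + c + i).choose (m + 1) : ℤ))) Q
      have hterm : ∀ i : ℕ, (((x + c + (i + 1)).choose (m + 1) : ℤ)) - ((x + c + i).choose (m + 1))
          = ((x + c + i).choose m : ℤ) := by
        intro i
        rw [show x + c + (i + 1) = (x + c + i) + 1 by ring, Nat.choose_succ_succ (x + c + i) m]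
        push_cast
        ring
      simp only [hterm] at htel
      simp only [fwdDiff, Finset.sum_apply]
      simp only [show ∀ i : ℕ, x + (c + i) = x + c + i from fun i => by ring]
      rw [htel, show x + Q + c = x + c + Q by ring, add_zero]
    rw [Function.iterate_succ_apply, h1, fwdDiff_iter_finset_sum]
    funext y
    simp only [Finset.sum_apply, IH]
    simp [pow_succ, mul_comm]

/-- With `k(s,d,q) = ∑_{j≥0} (-1)^j C(s-1,j) C(s-1+d-(q-1)j, s-1)` (binomials with
negative upper argument being `0`, encoded by the `if` guard), for all integers
`s ≥ 2`, `q ≥ 3` and all `d ≥ (s-1)(q-2)`, one has `k(s,d,q) = (q-1)^(s-1)`: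
the Hilbert function of the torus in `P^(s-1)` over `F_q` stabilizes at the number
of points `(q-1)^(s-1)` from the regularity `(s-1)(q-2)` onward. -/
theorem torus_hilbert_stabilizes (s q d : ℕ) (hs : 2 ≤ s) (hq : 3 ≤ q)
    (hd : (s - 1) * (q - 2) ≤ d) :
    (∑ j ∈ Finset.range s, (-1 : ℤ) ^ j * (s - 1).choose j *
        (if (q - 1) * j ≤ s - 1 + d then ((s - 1 + d - (q - 1) * j).choose (s - 1) : ℤ) else 0))
      = ((q - 1) ^ (s - 1) : ℤ) := by
  obtain ⟨m, rfl⟩ : ∃ m, s = m + 1 := ⟨s - 1, by omega⟩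
  obtain ⟨Q, rfl⟩ : ∃ Q, q = Q + 1 := ⟨q - 1, by omega⟩
  simp only [Nat.add_sub_cancel] at *
  have hQ : 2 ≤ Q := by omega
  have hd' : m * (Q - 1) ≤ d := by
    have he : Q + 1 - 2 = Q - 1 := by omega
    rwa [he] at hd
  set y : ℕ := d - m * (Q - 1) with hy
  -- remove the `if` guard
  have hguard : ∀ j ∈ Finset.range (m + 1),
      (-1 : ℤ) ^ j * m.choose j *
        (if Q * j ≤ m + d then ((m + d - Q * j).choose m : ℤ) else 0)
      = (-1 : ℤ) ^ j * m.choose j * ((m + d - Q * j).choose m : ℤ) := by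
    intro j hj
    rw [Finset.mem_range] at hj
    rw [if_pos]
    have h6 : Q * j ≤ Q * m := Nat.mul_le_mul_left _ (by omega)
    have h5 : Q - 1 + 1 = Q := by omega
    have h7 : m * (Q - 1) + m = Q * m := by
      calc m * (Q - 1) + m = m * ((Q - 1) + 1) := by ring
      _ = Q * m := by rw [h5]; ring
    omega
  rw [Finset.sum_congr rfl hguard]
  have key := fwdDiff_iter_eq_sum_shift (Q) (fun x : ℕ => ((x.choose m : ℤ))) m y
  have h0 : (fun x : ℕ => ((x.choose m : ℤ))) = (fun x : ℕ => (((x + 0).choose m : ℤ))) := by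
    simp
  rw [h0, fwdDiff_iter_choose_const] at key
  -- key : (Q:ℤ)^m = ∑ k in range (m+1), ((-1)^(m-k) * choose m k) • ((y + k • Q).choose m : ℤ)
  have hrefl := Finset.sum_range_reflect
    (fun j => (-1 : ℤ) ^ j * m.choose j * ((m + d - Q * j).choose m : ℤ)) (m + 1)
  rw [← hrefl, show ((Q + 1 : ℕ) : ℤ) - 1 = (Q : ℤ) by push_cast; ring]
  rw [show ((fun _ : ℕ => (Q : ℤ) ^ m) y = (Q : ℤ) ^ m) from rfl] at key
  rw [key]
  apply Finset.sum_congr rfl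
  intro k hk
  rw [Finset.mem_range] at hk
  have hk' : k ≤ m := by omega
  have h1 : m + 1 - 1 - k = m - k := by omega
  have h2 : m.choose (m - k) = m.choose k := Nat.choose_symm hk'
  have hA : m * (Q - 1) + m = Q * m := by
    have h5 : Q - 1 + 1 = Q := by omega
    calc m * (Q - 1) + m = m * ((Q - 1) + 1) := by ring
    _ = Q * m := by rw [h5]; ring
  have hB : Q * (m - k) + Q * k = Q * m := by
    rw [← Nat.mul_add]; congr 1; omega
  have hC : k * Q = Q * k := Nat.mul_comm _ _
  have h3 : m + d - Q * (m - k) = y + k * Q := by omega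
  rw [h1, h2, h3]
  simp only [smul_eq_mul, zsmul_eq_mul]
end

section
/- Let ℓ ≥ 1 and s = 2ℓ. Define f(d) = Σ_{i≥0} C(s, d-2i) for 0 ≤ d ≤ ℓ-1, f(d) = 2^{s-2} for d ≥ ℓ-1 (consistently at d = ℓ-1). Then f is nondecreasing on 0 ≤ d ≤ ℓ-1: i.e., for 0 ≤ d ≤ ℓ-2, Σ_{i≥0} C(s, d-2i) ≤ Σ_{i≥0} C(s, d+1-2i), with strict inequality. -/
theorem Nat.choose_lt_succ_of_lt_half_left {r n : ℕ} (h : r < n / 2) :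
    n.choose r < n.choose (r + 1) := by
  have hpos : 0 < n.choose r := Nat.choose_pos (by omega)
  refine Nat.lt_of_mul_lt_mul_right (a := r + 1) ?_
  rw [Nat.choose_succ_right_eq]
  exact Nat.mul_lt_mul_of_le_of_lt le_rfl (by omega) hpos

theorem sum_choose_same_parity_lt_succ {n d m : ℕ} (hd : d < n / 2) (hm : 0 < m) :
    (∑ i ∈ Finset.range m, if 2 * i ≤ d then n.choose (d - 2 * i) else 0) <
      ∑ i ∈ Finset.range m, if 2 * i ≤ d + 1 then n.choose (d + 1 - 2 * i) else 0 := by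
  have termwise (i : ℕ) (hi : 2 * i ≤ d) : n.choose (d - 2 * i) < n.choose (d + 1 - 2 * i) := by
    rw [show d + 1 - 2 * i = d - 2 * i + 1 by omega]
    exact Nat.choose_lt_succ_of_lt_half_left (by omega)
  apply Finset.sum_lt_sum
  · intro i _
    split_ifs with hi hi'
    · exact (termwise i hi).le
    · omega
    · exact Nat.zero_le _
    · exact le_rfl
  · exact ⟨0, Finset.mem_range.2 hm, by simpa using termwise 0 (Nat.zero_le d)⟩

/-- Strict monotonicity of the Hilbert function (dimension of the ternary code of the
even cycle `C_{2ℓ}`) below the regularity: for `ℓ ≥ 1`, `s = 2ℓ` and `0 ≤ d ≤ ℓ-2`,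
`∑_{i≥0} C(s, d-2i) < ∑_{i≥0} C(s, d+1-2i)` (terms with negative lower index vanish,
encoded by the `if` guards). -/
theorem parity_sum_strict_mono (ℓ s d : ℕ) (hℓ : 1 ≤ ℓ) (hs : s = 2 * ℓ)
    (hd : d ≤ ℓ - 2) :
    (∑ i ∈ Finset.range s, if 2 * i ≤ d then s.choose (d - 2 * i) else 0) <
      ∑ i ∈ Finset.range s, if 2 * i ≤ d + 1 then s.choose (d + 1 - 2 * i) else 0 := by
  subst hs
  exact sum_choose_same_parity_lt_succ (by omega) (by omega)
end
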